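/- The circle group ℝ/ℤ admits a faithful action on a countable set. -/

import Mathlib

/-!
Pick a `ℚ`-linear functional `f` on `ℝ` with `f 1 = 1`; then `x ↦ (f x mod ℤ, x - f x)` has
kernel exactly `ℤ`, so it embeds `ℝ/ℤ` into `ℚ/ℤ × ℝ`. The countable group `ℚ/ℤ` acts faithfully
on itself by translation, and `ℝ ≅ ℚ^ℕ` (both are `ℚ`-vector spaces of dimension `𝔠`) acts
faithfully on `ℕ × ℚ` by translating each fibre; the disjoint union of the two sets carries a
faithful action of the product.
-/

open Function

instance {α : Type*} [Countable α] : Countable (Multiplicative α) := ‹Countable α›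

def CountablyRepresentable (G : Type*) [Group G] : Prop :=
  ∃ (X : Type) (_ : Countable X) (φ : G →* Equiv.Perm X), Injective φ

namespace CountablyRepresentable

theorem of_injective {G H : Type*} [Group G] [Group H] {f : G →* H} (hf : Injective f)
    (hH : CountablyRepresentable H) : CountablyRepresentable G :=
  let ⟨X, hX, φ, hφ⟩ := hH
  ⟨X, hX, φ.comp f, hφ.comp hf⟩

theorem of_mulEquiv {G H : Type*} [Group G] [Group H] (e : G ≃* H)
    (hH : CountablyRepresentable H) : CountablyRepresentable G :=
  of_injective (f := e.toMonoidHom) e.injective hH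

theorem of_countable (G : Type) [Group G] [Countable G] : CountablyRepresentable G :=
  ⟨G, inferInstance, MulAction.toPermHom G G, MulAction.toPerm_injective⟩

theorem prod {G H : Type*} [Group G] [Group H] (hG : CountablyRepresentable G)
    (hH : CountablyRepresentable H) : CountablyRepresentable (G × H) :=
  let ⟨X, _, φ, hφ⟩ := hG
  let ⟨Y, _, ψ, hψ⟩ := hH
  ⟨X ⊕ Y, inferInstance, (Equiv.Perm.sumCongrHom X Y).comp (φ.prodMap ψ),
    Equiv.Perm.sumCongrHom_injective.comp (hφ.prodMap hψ)⟩

theorem pi {ι : Type} [Countable ι] {G : ι → Type*} [∀ i, Group (G i)]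
    (hG : ∀ i, CountablyRepresentable (G i)) : CountablyRepresentable (∀ i, G i) := by
  choose X hX φ hφ using hG
  exact ⟨Σ i, X i, inferInstance,
    (Equiv.Perm.sigmaCongrRightHom X).comp (MonoidHom.piMap φ),
    Equiv.Perm.sigmaCongrRightHom_injective.comp (Pi.map_injective.mpr hφ)⟩

end CountablyRepresentable

theorem QuotientAddGroup.exists_injective_zmultiples_prod {K V : Type*} [Ring K] [AddCommGroup V]
    [Module K V] (f : V →ₗ[K] K) {v : V} (hfv : f v = 1) :
    ∃ φ : V ⧸ AddSubgroup.zmultiples v →+ (K ⧸ AddSubgroup.zmultiples (1 : K)) × V,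
      Injective φ := by
  let F : V →+ (K ⧸ AddSubgroup.zmultiples (1 : K)) × V :=
    ((QuotientAddGroup.mk' _).comp f.toAddMonoidHom).prod
      (LinearMap.id - f.smulRight v).toAddMonoidHom
  have hker : AddSubgroup.zmultiples v = F.ker := by
    ext x
    simp only [AddMonoidHom.mem_ker, F, AddMonoidHom.prod_apply, Prod.mk_eq_zero]
    constructor
    · rintro ⟨n, rfl⟩
      simp [hfv]
    · rintro ⟨hq, hx⟩
      obtain ⟨n, hn⟩ := (QuotientAddGroup.eq_zero_iff _).mp hq
      have hn' : n • (1 : K) = f x := hn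
      have hx' : x = f x • v := sub_eq_zero.mp hx
      exact ⟨n, by rw [hx', ← hn', smul_one_smul]⟩
  exact ⟨QuotientAddGroup.lift _ F hker.le,
    (QuotientAddGroup.injective_lift_iff _ F hker.le).mpr hker⟩

theorem Real.nonempty_linearEquiv_nat_rat : Nonempty (ℝ ≃ₗ[ℚ] (ℕ → ℚ)) := by
  apply nonempty_linearEquiv_of_rank_eq
  rw [rank_fun_infinite, Module.Free.rank_eq_mk_of_infinite_lt]
  · simp [Cardinal.mk_real]
  · simpa [Cardinal.mk_real] using Cardinal.aleph0_lt_continuum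

theorem countablyRepresentable_multiplicative_real :
    CountablyRepresentable (Multiplicative ℝ) := by
  obtain ⟨e⟩ := Real.nonempty_linearEquiv_nat_rat
  exact .of_mulEquiv (e.toAddEquiv.toMultiplicative.trans (MulEquiv.funMultiplicative ℕ ℚ))
    (.pi fun _ ↦ .of_countable _)

/-- The circle group `ℝ/ℤ` admits a faithful action on a countable set. -/
theorem circle_countably_representable :
    ∃ (X : Type) (_ : Countable X)
      (φ : Multiplicative (ℝ ⧸ AddSubgroup.zmultiples (1 : ℝ)) →* Equiv.Perm X),
      Function.Injective φ := by
  obtain ⟨f, hf⟩ := Module.Projective.exists_dual_eq_one ℚ (one_ne_zero : (1 : ℝ) ≠ 0)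
  obtain ⟨φ, hφ⟩ := QuotientAddGroup.exists_injective_zmultiples_prod f hf
  have : Countable (ℚ ⧸ AddSubgroup.zmultiples (1 : ℚ)) := Quotient.countable
  have hprod : CountablyRepresentable
      (Multiplicative ((ℚ ⧸ AddSubgroup.zmultiples (1 : ℚ)) × ℝ)) :=
    .of_mulEquiv (MulEquiv.prodMultiplicative _ _)
      ((CountablyRepresentable.of_countable _).prod countablyRepresentable_multiplicative_real)
  exact hprod.of_injective (f := φ.toMultiplicative) hφ
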